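/- arXiv:2103.12629 — 2 statements merged into one kernel-verified Lean document; each statement's English description precedes it below -/
import Mathlib

section
/- Let L be a closed Riemannian manifold and suppose v(t,x) = e^{iλt} Σ_{j=0}^d a_j(x) t^j is a nontrivial solution of ∂_t^2 v + 2 ∂_t v + Δ_{g_L} v = 0 on ℝ × L, where a_j are smooth functions on L and λ ∈ ℂ. Then the leading coefficient satisfies Δ_{g_L} a_d + (−λ^2 + 2iλ) a_d = 0, hence −λ^2 + 2iλ is real and nonnegative, and consequently Im λ ∉ (0,2). -/
/-! A time derivative of `t ↦ p(t) e^{ct}` is `t ↦ (p' + c p)(t) e^{ct}`, so with `c = iλ` the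
equation reads `e^{ct} • Q(t) = 0` for an `E`-valued polynomial `Q`. The derivative terms lower
the degree, hence the coefficient of `t^d` in `Q` is `Δ a_d + (c² + 2c) a_d`, and it vanishes
because a polynomial vanishing on `ℝ` has zero coefficients (test against linear functionals).
Pairing this eigen-equation with `a_d` and using that `Δ` is symmetric and nonpositive makes
`μ = -λ² + 2iλ` real and nonnegative. For `λ = x + iy`, `Im μ = 2x(1 - y)` and
`Re μ = y(y - 2) - x²`, which excludes `0 < y < 2`. -/

open Polynomial

namespace Polynomial

variable {R : Type*} [CommSemiring R]

noncomputable def expDeriv (c : R) (p : R[X]) : R[X] := derivative p + C c * p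

noncomputable def driftPoly (c : R) (p : R[X]) : R[X] :=
  expDeriv c (expDeriv c p) + 2 * expDeriv c p

variable {c : R} {p : R[X]} {n : ℕ}

theorem natDegree_expDeriv_le (h : p.natDegree ≤ n) : (expDeriv c p).natDegree ≤ n :=
  natDegree_add_le_of_degree_le ((natDegree_derivative_le p).trans (by omega))
    ((natDegree_C_mul_le c p).trans h)

theorem coeff_expDeriv_of_natDegree_le (h : p.natDegree ≤ n) :
    (expDeriv c p).coeff n = c * p.coeff n := by
  rw [expDeriv, coeff_add, coeff_derivative, coeff_eq_zero_of_natDegree_lt (by omega),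
    zero_mul, zero_add, coeff_C_mul]

theorem coeff_driftPoly_of_natDegree_le (h : p.natDegree ≤ n) :
    (driftPoly c p).coeff n = (c ^ 2 + 2 * c) * p.coeff n := by
  rw [driftPoly, coeff_add, coeff_ofNat_mul,
    coeff_expDeriv_of_natDegree_le (natDegree_expDeriv_le h), coeff_expDeriv_of_natDegree_le h]
  ring

end Polynomial

theorem Polynomial.sum_coeff_X_pow_smul {R M : Type*} [Semiring R] [AddCommMonoid M] [Module R M]
    (d : ℕ) (x : Fin (d + 1) → M) :
    ∑ j : Fin (d + 1), ((X : R[X]) ^ (j : ℕ)).coeff d • x j = x (Fin.last d) := by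
  rw [Finset.sum_eq_single (Fin.last d)]
  · simp
  · intro j _ hj
    rw [coeff_X_pow, if_neg (by have := Fin.val_lt_last hj; omega), zero_smul]
  · simp

theorem sum_coeff_smul_eq_zero_of_forall_eval_smul_eq_zero {K V ι : Type*} [Field K]
    [AddCommGroup V] [Module K V] [Fintype ι] (q : ι → K[X]) (b : ι → V) {S : Set K}
    (hS : S.Infinite) (h : ∀ t ∈ S, ∑ i, (q i).eval t • b i = 0) (n : ℕ) :
    ∑ i, (q i).coeff n • b i = 0 := by
  refine (Module.forall_dual_apply_eq_zero_iff K _).mp fun φ => ?_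
  set r : K[X] := ∑ i, C (φ (b i)) * q i
  have hr : r = 0 := by
    refine eq_zero_of_infinite_isRoot r (hS.mono fun t ht => ?_)
    have := congrArg φ (h t ht)
    simp only [map_sum, map_smul, smul_eq_mul, map_zero] at this
    simp [r, eval_finsetSum, ← this, mul_comm]
  have := congrArg (coeff · n) hr
  simpa [r, finsetSum_coeff, mul_comm] using this

open Complex in
theorem Polynomial.hasDerivAt_eval_mul_cexp (c : ℂ) (p : ℂ[X]) (t : ℝ) :
    HasDerivAt (fun s : ℝ => p.eval (s : ℂ) * exp (c * s))
      ((expDeriv c p).eval (t : ℂ) * exp (c * t)) t := by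
  have hexp : HasDerivAt (fun z : ℂ => exp (c * z)) (exp (c * t) * c) t := by
    simpa using ((hasDerivAt_id (t : ℂ)).const_mul c).cexp
  convert ((p.hasDerivAt (t : ℂ)).fun_mul hexp).comp_ofReal using 1
  simp only [expDeriv, eval_add, eval_mul, eval_C]
  ring

section ExpPolySum

variable {ι E : Type*} [Fintype ι] [NormedAddCommGroup E] [NormedSpace ℂ E]

noncomputable def expPolySum (c : ℂ) (p : ι → ℂ[X]) (b : ι → E) (t : ℝ) : E :=
  ∑ i, ((p i).eval (t : ℂ) * Complex.exp (c * t)) • b i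

theorem hasDerivAt_expPolySum (c : ℂ) (p : ι → ℂ[X]) (b : ι → E) (t : ℝ) :
    HasDerivAt (expPolySum c p b) (expPolySum c (fun i => expDeriv c (p i)) b t) t :=
  HasDerivAt.fun_sum fun i _ => (hasDerivAt_eval_mul_cexp c (p i) t).smul_const (b i)

theorem deriv_expPolySum (c : ℂ) (p : ι → ℂ[X]) (b : ι → E) :
    deriv (expPolySum c p b) = expPolySum c (fun i => expDeriv c (p i)) b :=
  funext fun t => (hasDerivAt_expPolySum c p b t).deriv

theorem drift_expPolySum (Δ : E →ₗ[ℂ] E) (c : ℂ) (p : ι → ℂ[X]) (b : ι → E) (t : ℝ) :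
    deriv (deriv (expPolySum c p b)) t + (2 : ℝ) • deriv (expPolySum c p b) t
        + Δ (expPolySum c p b t)
      = Complex.exp (c * t) •
          ∑ i, ((driftPoly c (p i)).eval (t : ℂ) • b i + (p i).eval (t : ℂ) • Δ (b i)) := by
  simp only [driftPoly, deriv_expPolySum, expPolySum, map_sum, map_smul, Finset.smul_sum,
    two_smul, ← Finset.sum_add_distrib, eval_add, eval_mul, eval_ofNat]
  refine Finset.sum_congr rfl fun i _ => ?_
  match_scalars <;> ring

end ExpPolySum

open Complex in
theorem im_notMem_Ioo_zero_two_of_im_eq_zero_of_re_nonneg (lam : ℂ)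
    (him : (-lam ^ 2 + 2 * I * lam).im = 0) (hre : 0 ≤ (-lam ^ 2 + 2 * I * lam).re) :
    lam.im ∉ Set.Ioo (0 : ℝ) 2 := by
  rintro ⟨hpos, hlt⟩
  have hIm : (-lam ^ 2 + 2 * I * lam).im = 2 * lam.re * (1 - lam.im) := by
    simp only [pow_two, add_im, neg_im, mul_im, mul_re, I_re, I_im, re_ofNat, im_ofNat]
    ring
  have hRe : (-lam ^ 2 + 2 * I * lam).re = lam.im * (lam.im - 2) - lam.re ^ 2 := by
    simp only [pow_two, add_re, neg_re, mul_re, mul_im, I_re, I_im, re_ofNat, im_ofNat]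
    ring
  rw [hIm] at him
  rw [hRe] at hre
  rcases mul_eq_zero.mp him with hre0 | him1
  · have : lam.re = 0 := by linarith
    nlinarith [mul_pos hpos (sub_pos.mpr hlt)]
  · nlinarith [sq_nonneg lam.re]

theorem LinearMap.IsSymmetric.im_eq_zero_and_re_nonneg_of_add_smul_eq_zero {E : Type*}
    [NormedAddCommGroup E] [InnerProductSpace ℂ E] {T : E →ₗ[ℂ] E} (hT : T.IsSymmetric)
    (hneg : ∀ u : E, (inner ℂ (T u) u).re ≤ 0) {x : E} (hx : x ≠ 0) {μ : ℂ}
    (h : T x + μ • x = 0) : μ.im = 0 ∧ 0 ≤ μ.re := by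
  have hnorm : 0 < ‖x‖ ^ 2 := by positivity
  have hinner : inner ℂ (T x) x = -(μ * (‖x‖ ^ 2 : ℝ)) := by
    rw [hT, eq_neg_of_add_eq_zero_left h, inner_neg_right, inner_smul_right,
      inner_self_eq_norm_sq_to_K]
    push_cast; rfl
  have hreal : (inner ℂ (T x) x).im = 0 :=
    Complex.conj_eq_iff_im.mp (by rw [inner_conj_symm, hT])
  have hnonpos := hneg x
  rw [hinner] at hreal hnonpos
  simp only [Complex.neg_im, Complex.neg_re, Complex.im_mul_ofReal, Complex.re_mul_ofReal,
    neg_eq_zero, mul_eq_zero, hnorm.ne', or_false] at hreal hnonpos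
  exact ⟨hreal, by nlinarith⟩

/-- Indicial roots of the translation-invariant drift Laplacian on a cylinder `ℝ × L`.
The functions on the closed manifold `L` are modelled by a complex inner product space
`E`, and the Laplace–Beltrami operator `Δ_{g_L}` by a symmetric, negative semi-definite
linear operator `Δ` on `E`.  If
`v(t) = e^{iλt} Σ_{j=0}^d t^j • a_j` is a nontrivial (leading coefficient `a_d ≠ 0`)
solution of `v'' + 2v' + Δ v = 0`, then the leading coefficient satisfies
`Δ a_d + (-λ² + 2iλ) a_d = 0`, hence `-λ² + 2iλ` is real and nonnegative, and
consequently `Im λ ∉ (0,2)`. -/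
theorem drift_laplacian_no_critical_weight {E : Type*} [NormedAddCommGroup E]
    [InnerProductSpace ℂ E]
    (Δ : E →ₗ[ℂ] E)
    (hsym : ∀ u w : E, (inner ℂ (Δ u) w : ℂ) = inner ℂ u (Δ w))
    (hneg : ∀ u : E, (inner ℂ (Δ u) u : ℂ).re ≤ 0)
    (d : ℕ) (a : Fin (d + 1) → E) (lam : ℂ)
    (hlead : a (Fin.last d) ≠ 0)
    (hsol : ∀ t : ℝ,
      deriv (deriv (fun t : ℝ =>
          ∑ j : Fin (d + 1), ((t : ℂ) ^ (j : ℕ) * Complex.exp (Complex.I * lam * t)) • a j)) t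
        + (2 : ℝ) • deriv (fun t : ℝ =>
          ∑ j : Fin (d + 1), ((t : ℂ) ^ (j : ℕ) * Complex.exp (Complex.I * lam * t)) • a j) t
        + Δ (∑ j : Fin (d + 1), ((t : ℂ) ^ (j : ℕ) * Complex.exp (Complex.I * lam * t)) • a j)
        = 0) :
    Δ (a (Fin.last d)) + (-lam ^ 2 + 2 * Complex.I * lam) • a (Fin.last d) = 0
      ∧ (-lam ^ 2 + 2 * Complex.I * lam).im = 0
      ∧ 0 ≤ (-lam ^ 2 + 2 * Complex.I * lam).re
      ∧ lam.im ∉ Set.Ioo (0 : ℝ) 2 := by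
  set c := Complex.I * lam
  set q : Fin (d + 1) ⊕ Fin (d + 1) → ℂ[X] :=
    Sum.elim (fun j => driftPoly c (X ^ (j : ℕ))) (fun j => X ^ (j : ℕ))
  set b : Fin (d + 1) ⊕ Fin (d + 1) → E := Sum.elim a (fun j => Δ (a j))
  have hv (t : ℝ) : ∑ j : Fin (d + 1), ((t : ℂ) ^ (j : ℕ) * Complex.exp (c * t)) • a j
      = expPolySum c (fun j : Fin (d + 1) => X ^ (j : ℕ)) a t := by
    simp [expPolySum]
  have hpoly : ∀ t ∈ Set.range ((↑) : ℝ → ℂ), ∑ i, (q i).eval t • b i = 0 := by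
    rintro _ ⟨t, rfl⟩
    have h := hsol t
    simp only [hv] at h
    rw [drift_expPolySum, smul_eq_zero] at h
    simpa [q, b, Fintype.sum_sum_type, Finset.sum_add_distrib]
      using h.resolve_left (Complex.exp_ne_zero _)
  have hcoeff := sum_coeff_smul_eq_zero_of_forall_eval_smul_eq_zero q b
    (Set.infinite_range_of_injective Complex.ofReal_injective) hpoly d
  have hdeg (j : Fin (d + 1)) : ((X : ℂ[X]) ^ (j : ℕ)).natDegree ≤ d :=
    (natDegree_X_pow_le _).trans (Nat.lt_succ_iff.mp j.2)
  simp only [q, b, Fintype.sum_sum_type, Sum.elim_inl, Sum.elim_inr,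
    coeff_driftPoly_of_natDegree_le (hdeg _), mul_smul, ← Finset.smul_sum,
    sum_coeff_X_pow_smul] at hcoeff
  have hμ : c ^ 2 + 2 * c = -lam ^ 2 + 2 * Complex.I * lam := by
    linear_combination lam ^ 2 * Complex.I_sq
  have hfirst : Δ (a (Fin.last d)) + (-lam ^ 2 + 2 * Complex.I * lam) • a (Fin.last d) = 0 := by
    rw [← hμ, add_comm]
    exact hcoeff
  obtain ⟨him, hre⟩ :=
    LinearMap.IsSymmetric.im_eq_zero_and_re_nonneg_of_add_smul_eq_zero hsym hneg hlead hfirst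
  exact ⟨hfirst, him, hre, im_notMem_Ioo_zero_two_of_im_eq_zero_of_re_nonneg lam him hre⟩
end

section
/- Let (M,g) be a complete Riemannian manifold, X a complete vector field with flow (Φ_τ), and φ a bounded C^2 function on M such that φ(Φ_τ(x)) has limits as τ → ±∞ for every x. If sup_M φ ≤ A, inf_M φ ≥ −A and (X∘X)(φ) ≥ −B on M for constants A, B ≥ 0, then X(φ)(x) ≤ 4A + B for every x ∈ M. -/
/-! Along a flow line `f τ = φ (Φ τ x)`, the bound `f'' ≥ -B` makes `f τ + B τ² / 2` convex, so its
derivative at `0` is at most its slope on `[0, 1]`. This gives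
`f'(0) ≤ f 1 - f 0 + B / 2 ≤ 2A + B / 2 ≤ 4A + B`. -/

open Set

theorem hasDerivAt_add_half_mul_sq {f : ℝ → ℝ} {f' : ℝ} (B : ℝ) {x : ℝ} (hf : HasDerivAt f f' x) :
    HasDerivAt (fun τ => f τ + B / 2 * τ ^ 2) (f' + B * x) x := by
  refine (hf.fun_add ((hasDerivAt_pow 2 x).const_mul (B / 2))).congr_deriv ?_
  push_cast
  ring

theorem convexOn_univ_add_half_mul_sq_of_neg_le_deriv2 {f : ℝ → ℝ} {B : ℝ}
    (hf : Differentiable ℝ f) (hf' : Differentiable ℝ (deriv f))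
    (hf'' : ∀ τ, -B ≤ deriv (deriv f) τ) :
    ConvexOn ℝ univ (fun τ => f τ + B / 2 * τ ^ 2) := by
  have hderiv : deriv (fun τ => f τ + B / 2 * τ ^ 2) = fun τ => deriv f τ + B * τ :=
    funext fun τ => (hasDerivAt_add_half_mul_sq B (hf τ).hasDerivAt).deriv
  have hderiv2 (τ : ℝ) : HasDerivAt (fun τ => deriv f τ + B * τ) (deriv (deriv f) τ + B) τ := by
    simpa using (hf' τ).hasDerivAt.fun_add ((hasDerivAt_id τ).const_mul B)
  refine convexOn_univ_of_deriv2_nonneg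
    (fun τ => (hasDerivAt_add_half_mul_sq B (hf τ).hasDerivAt).differentiableAt) ?_ fun τ => ?_
  · rw [hderiv]
    exact fun τ => (hderiv2 τ).differentiableAt
  · rw [Function.iterate_succ_apply, Function.iterate_one, hderiv, (hderiv2 τ).deriv]
    linarith [hf'' τ]

theorem deriv_le_of_abs_le_of_neg_le_deriv2 {f : ℝ → ℝ} {A B : ℝ} (hf : Differentiable ℝ f)
    (hf' : Differentiable ℝ (deriv f)) (hbd : ∀ τ, |f τ| ≤ A)
    (hf'' : ∀ τ, -B ≤ deriv (deriv f) τ) (x : ℝ) :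
    deriv f x ≤ 2 * A + B / 2 := by
  have hslope := (convexOn_univ_add_half_mul_sq_of_neg_le_deriv2 hf hf' hf'').le_slope_of_hasDerivAt
    (mem_univ x) (mem_univ (x + 1)) (lt_add_one x) (hasDerivAt_add_half_mul_sq B (hf x).hasDerivAt)
  simp only [slope_def_field, add_sub_cancel_left, div_one] at hslope
  have hx := abs_le.mp (hbd x)
  have hx1 := abs_le.mp (hbd (x + 1))
  nlinarith [hx.1, hx1.2]

theorem flow_derivative_bound_general {M : Type*} (Φ : ℝ → M → M)
    (φ : M → ℝ) (A B : ℝ) (hA : 0 ≤ A) (hB : 0 ≤ B)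
    (hC2 : ∀ x, ContDiff ℝ 2 (fun τ : ℝ => φ (Φ τ x)))
    (hbd : ∀ x, |φ x| ≤ A)
    (hXX : ∀ x (τ : ℝ), -B ≤ deriv (deriv (fun σ : ℝ => φ (Φ σ x))) τ) :
    ∀ x, deriv (fun τ : ℝ => φ (Φ τ x)) 0 ≤ 4 * A + B := by
  intro x
  have := deriv_le_of_abs_le_of_neg_le_deriv2 ((hC2 x).differentiable (by norm_num))
    (hC2 x).differentiable_deriv_two (fun τ => hbd _) (hXX x) 0
  linarith

/-- Flow version of the radial-derivative bound.  Let `Φ` be the flow of a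
complete vector field `X` on `M` and `φ` a function which is `C²` along the
flow lines, with `|φ| ≤ A`, with limits along each flow line as `τ → ±∞`, and
with `X(X(φ)) ≥ -B` (second derivative along the flow).  Then
`X(φ)(x) = d/dτ|₀ φ(Φ_τ x) ≤ 4A + B` for every `x`. -/
theorem flow_derivative_bound {M : Type*} (Φ : ℝ → M → M)
    (hΦ0 : ∀ x, Φ 0 x = x) (hΦadd : ∀ s t x, Φ s (Φ t x) = Φ (s + t) x)
    (φ : M → ℝ) (A B : ℝ) (hA : 0 ≤ A) (hB : 0 ≤ B)
    (hC2 : ∀ x, ContDiff ℝ 2 (fun τ : ℝ => φ (Φ τ x)))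
    (hbd : ∀ x, |φ x| ≤ A)
    (hlim_top : ∀ x, ∃ l, Filter.Tendsto (fun τ : ℝ => φ (Φ τ x)) Filter.atTop (nhds l))
    (hlim_bot : ∀ x, ∃ l, Filter.Tendsto (fun τ : ℝ => φ (Φ τ x)) Filter.atBot (nhds l))
    (hXX : ∀ x (τ : ℝ), -B ≤ deriv (deriv (fun σ : ℝ => φ (Φ σ x))) τ) :
    ∀ x, deriv (fun τ : ℝ => φ (Φ τ x)) 0 ≤ 4 * A + B :=
  flow_derivative_bound_general Φ φ A B hA hB hC2 hbd hXX
end
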